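/- Let X = (⋃ₙ Aₙ) ∪ B be the atomic/non-atomic decomposition of a σ-finite measure space, and let Φ₁, Φ₂ be Young functions with Φ₁, Φ₂ ∈ Δ' and such that Φ₂∘Φ₁⁻¹ is a Young function. If u ∈ L⁰(Σ) satisfies (i) u = 0 μ-a.e. on B and (ii) sup_n Φ₂(u(Aₙ)/Φ₁⁻¹(μ(Aₙ)))·μ(Aₙ) < ∞, then M_u is a bounded multiplication operator from L^{Φ₁}(Σ) into L^{Φ₂}(Σ). -/

import Mathlib

open MeasureTheory Filter Topology

/-- A Young function: continuous, convex, even, vanishing exactly at 0,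
with superlinear growth at infinity. -/
structure YoungFunction where
  toFun : ℝ → ℝ
  continuous' : Continuous toFun
  convexOn' : ConvexOn ℝ Set.univ toFun
  even' : ∀ x, toFun (-x) = toFun x
  zero_iff' : ∀ x, toFun x = 0 ↔ x = 0
  tendsto_atTop' : Tendsto (fun x => toFun x / x) atTop atTop

instance : CoeFun YoungFunction fun _ => ℝ → ℝ := ⟨YoungFunction.toFun⟩

variable {X : Type*} [MeasurableSpace X]

/-- Membership in the Orlicz space `L^Φ(μ)`. -/
def MemOrlicz (Φ : YoungFunction) (μ : Measure X) (f : X → ℝ) : Prop :=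
  AEStronglyMeasurable f μ ∧ ∃ k > 0, Integrable (fun x => Φ (k * f x)) μ

/-- The Luxemburg norm on the Orlicz space `L^Φ(μ)`. -/
noncomputable def luxNorm (Φ : YoungFunction) (μ : Measure X) (f : X → ℝ) : ℝ :=
  sInf {k : ℝ | 0 < k ∧ ∫ x, Φ (f x / k) ∂μ ≤ 1}

/-- The generalized (right) inverse of a Young function on `[0,∞)`. -/
noncomputable def yInv (Φ : YoungFunction) (y : ℝ) : ℝ :=
  sSup {x : ℝ | 0 ≤ x ∧ Φ x ≤ y}

/-- `Φ` satisfies the `Δ₂` condition globally. -/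
def YoungDeltaTwo (Φ : YoungFunction) : Prop :=
  ∃ k > 0, ∀ x : ℝ, 0 ≤ x → Φ (2 * x) ≤ k * Φ x

/-- `Φ` satisfies the `Δ'` condition globally, with constant `c`. -/
def YoungDeltaPrime (Φ : YoungFunction) (c : ℝ) : Prop :=
  0 < c ∧ ∀ x y : ℝ, 0 ≤ x → 0 ≤ y → Φ (x * y) ≤ c * Φ x * Φ y

/-- `Φ` satisfies the `∇'` condition globally, with constant `b`. -/
def YoungNablaPrime (Φ : YoungFunction) (b : ℝ) : Prop :=
  0 < b ∧ ∀ x y : ℝ, 0 ≤ x → 0 ≤ y → Φ x * Φ y ≤ Φ (b * x * y)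

/-- `Φ ≺ Ψ` : `Φ` is weaker than `Ψ`. -/
def YoungWeaker (Φ Ψ : YoungFunction) : Prop :=
  ∃ a > 0, ∃ x₀ : ℝ, 0 ≤ x₀ ∧ ∀ x : ℝ, x₀ ≤ x → Φ x ≤ Ψ (a * x)

/-- `A` is an atom of the measure `μ`. -/
def IsAtomSet (μ : Measure X) (A : Set X) : Prop :=
  MeasurableSet A ∧ 0 < μ A ∧
    ∀ B : Set X, MeasurableSet B → B ⊆ A → μ B = 0 ∨ μ B = μ A

/-- `μ` is non-atomic on the set `S`. -/
def NonAtomicOn (μ : Measure X) (S : Set X) : Prop :=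
  ∀ A : Set X, A ⊆ S → ¬ IsAtomSet μ A

/-- A linear map between Orlicz spaces (given as a map on functions) is bounded. -/
def OrliczBounded (Φ₁ Φ₂ : YoungFunction) (μ : Measure X)
    (Tmap : (X → ℝ) → (X → ℝ)) : Prop :=
  ∃ C > 0, ∀ f : X → ℝ, MemOrlicz Φ₁ μ f →
    MemOrlicz Φ₂ μ (Tmap f) ∧ luxNorm Φ₂ μ (Tmap f) ≤ C * luxNorm Φ₁ μ f

/-- The atomic decomposition of a σ-finite measure space: `X = (⋃ n, A n) ∪ B`
with the `A n` pairwise disjoint atoms of finite measure and `B` non-atomic. -/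
def AtomicDecomposition (μ : Measure X) (A : ℕ → Set X) (B : Set X) : Prop :=
  (∀ n, IsAtomSet μ (A n)) ∧ (∀ n, μ (A n) < ⊤) ∧
    Pairwise (Function.onFun Disjoint A) ∧ (∀ n, Disjoint (A n) B) ∧
    MeasurableSet B ∧ NonAtomicOn μ B ∧ (⋃ n, A n) ∪ B = Set.univ


/-!
On an atom `Aₙ` of measure `a`, both `u` and `f` are a.e. constant, say `v` and `t`, and
`∫ Φ₁ ∘ f ≤ 1` forces `Φ₁(t) a ≤ 1`. Put `d = Φ₁⁻¹(a)` and `Ψ = Φ₂ ∘ Φ₁⁻¹`. Then `Φ₂ ≤ Ψ ∘ Φ₁`,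
and `Ψ(λ x) ≤ λ Ψ(x)` for `λ ≤ 1` by convexity. Splitting `v t = (v / d)(d t)` and applying `Δ'`
twice gives
`Φ₂(v t) a ≤ c₂ Φ₂(v / d) Ψ(c₁ Φ₁(d) Φ₁(t)) a ≤ c₂ Ψ(c₁) (Φ₂(v / d) a) (Φ₁(t) a)`.
Since `u = 0` on `B`, summing over the atoms bounds `∫ Φ₂ ∘ (u f)` by
`C = c₂ Ψ(c₁) M` times `∫ Φ₁ ∘ f`. This gives `‖u f‖ ≤ max C 1 ‖f‖` for the Luxemburg norms.
-/

open scoped ENNReal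

namespace YoungFunction

variable (Φ : YoungFunction)

lemma map_zero : Φ 0 = 0 := (Φ.zero_iff' 0).mpr rfl

lemma apply_abs (x : ℝ) : Φ |x| = Φ x := by
  rcases abs_choice x with h | h <;> simp only [h, Φ.even']

lemma nonneg (x : ℝ) : 0 ≤ Φ x := by
  have h := Φ.convexOn'.2 (Set.mem_univ x) (Set.mem_univ (-x))
    (by norm_num : (0 : ℝ) ≤ 1 / 2) (by norm_num : (0 : ℝ) ≤ 1 / 2) (by norm_num)
  simp only [smul_eq_mul, Φ.even'] at h
  rw [show (1 / 2 : ℝ) * x + 1 / 2 * -x = 0 by ring, Φ.map_zero] at h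
  linarith

lemma apply_mul_le {l : ℝ} (h0 : 0 ≤ l) (h1 : l ≤ 1) (x : ℝ) : Φ (l * x) ≤ l * Φ x := by
  have h := Φ.convexOn'.2 (Set.mem_univ x) (Set.mem_univ 0) h0 (sub_nonneg.2 h1)
    (add_sub_cancel l 1)
  simpa only [smul_eq_mul, mul_zero, add_zero, Φ.map_zero] using h

lemma monotoneOn : MonotoneOn Φ (Set.Ici 0) := by
  intro a ha b _ hab
  rcases (ha.trans hab).eq_or_lt with hb | hb
  · obtain rfl := hb
    rw [le_antisymm hab ha]
  · have hl : a / b ≤ 1 := div_le_one_of_le₀ hab hb.le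
    calc Φ a = Φ (a / b * b) := by rw [div_mul_cancel₀ a hb.ne']
      _ ≤ a / b * Φ b := Φ.apply_mul_le (div_nonneg ha hb.le) hl b
      _ ≤ Φ b := mul_le_of_le_one_left (Φ.nonneg b) hl

lemma bddAbove_sublevel (y : ℝ) : BddAbove {x : ℝ | 0 ≤ x ∧ Φ x ≤ y} := by
  obtain ⟨x₀, hx₀⟩ := Filter.tendsto_atTop_atTop.mp Φ.tendsto_atTop' 1
  refine ⟨max x₀ y, fun x ⟨hx, hxy⟩ => ?_⟩
  rcases lt_or_ge x x₀ with h | h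
  · exact le_max_of_le_left h.le
  · refine le_max_of_le_right (le_trans ?_ hxy)
    rcases hx.eq_or_lt with rfl | hpos
    · exact Φ.nonneg 0
    · simpa using (le_div_iff₀ hpos).mp (hx₀ x h)

lemma yInv_mem {y : ℝ} (hy : 0 ≤ y) : yInv Φ y ∈ {x : ℝ | 0 ≤ x ∧ Φ x ≤ y} := by
  have hclosed : IsClosed {x : ℝ | 0 ≤ x ∧ Φ x ≤ y} :=
    (isClosed_le continuous_const continuous_id).inter
      (isClosed_le Φ.continuous' continuous_const)
  exact hclosed.csSup_mem ⟨0, le_rfl, by rwa [Φ.map_zero]⟩ (Φ.bddAbove_sublevel y)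

lemma apply_yInv_le {y : ℝ} (hy : 0 ≤ y) : Φ (yInv Φ y) ≤ y := (Φ.yInv_mem hy).2

lemma le_yInv {x y : ℝ} (hx : 0 ≤ x) (h : Φ x ≤ y) : x ≤ yInv Φ y :=
  le_csSup (Φ.bddAbove_sublevel y) ⟨hx, h⟩

lemma yInv_pos {y : ℝ} (hy : 0 < y) : 0 < yInv Φ y := by
  have hsmall : ∀ᶠ x in 𝓝[>] (0 : ℝ), Φ x < y :=
    nhdsWithin_le_nhds (Φ.continuous'.continuousAt.eventually_lt continuousAt_const
      (by rwa [Φ.map_zero]))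
  obtain ⟨x, hxy, hx⟩ := (hsmall.and self_mem_nhdsWithin).exists
  exact hx.trans_le (Φ.le_yInv (le_of_lt hx) hxy.le)

end YoungFunction

section DeltaPrime

variable {Φ Φ₁ Φ₂ Ψ : YoungFunction} {c c₁ c₂ : ℝ}

lemma YoungDeltaPrime.apply_mul_le (h : YoungDeltaPrime Φ c) (x y : ℝ) :
    Φ (x * y) ≤ c * Φ x * Φ y := by
  simpa only [← abs_mul, Φ.apply_abs] using h.2 |x| |y| (abs_nonneg x) (abs_nonneg y)

lemma YoungDeltaPrime.integrable_apply_mul {μ : Measure X} {f : X → ℝ}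
    (h : YoungDeltaPrime Φ c) (hf : MemOrlicz Φ μ f) (t : ℝ) :
    Integrable (fun x => Φ (t * f x)) μ := by
  obtain ⟨hfm, k, hk, hint⟩ := hf
  refine (hint.const_mul (c * Φ (t / k))).mono'
    (Φ.continuous'.comp_aestronglyMeasurable (hfm.const_mul t)) (ae_of_all _ fun x => ?_)
  rw [Real.norm_of_nonneg (Φ.nonneg _)]
  calc Φ (t * f x) = Φ (t / k * (k * f x)) := by field_simp
    _ ≤ c * Φ (t / k) * Φ (k * f x) := h.apply_mul_le _ _

lemma apply_le_apply_yInv_comp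
    (hΨ : ∀ x : ℝ, 0 ≤ x → Ψ x = Φ₂ (yInv Φ₁ x)) (t : ℝ) : Φ₂ t ≤ Ψ (Φ₁ t) := by
  rw [← Φ₂.apply_abs, ← Φ₁.apply_abs, hΨ _ (Φ₁.nonneg _)]
  exact Φ₂.monotoneOn (abs_nonneg t) (Φ₁.yInv_mem (Φ₁.nonneg _)).1
    (Φ₁.le_yInv (abs_nonneg t) le_rfl)

lemma apply_yInv_mul_le (hΔ₁ : YoungDeltaPrime Φ₁ c₁)
    (hΨ : ∀ x : ℝ, 0 ≤ x → Ψ x = Φ₂ (yInv Φ₁ x)) {a t : ℝ} (ha : 0 ≤ a)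
    (hta : Φ₁ t * a ≤ 1) : Φ₂ (yInv Φ₁ a * t) ≤ Ψ c₁ * (Φ₁ t * a) := by
  have hΦ₁ : Φ₁ (yInv Φ₁ a * t) ≤ Φ₁ t * a * c₁ :=
    calc Φ₁ (yInv Φ₁ a * t) ≤ c₁ * Φ₁ (yInv Φ₁ a) * Φ₁ t := hΔ₁.apply_mul_le _ _
      _ ≤ c₁ * a * Φ₁ t := by
        gcongr
        · exact Φ₁.nonneg t
        · exact hΔ₁.1.le
        · exact Φ₁.apply_yInv_le ha
      _ = Φ₁ t * a * c₁ := by ring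
  have hta₀ : 0 ≤ Φ₁ t * a := mul_nonneg (Φ₁.nonneg t) ha
  calc Φ₂ (yInv Φ₁ a * t) ≤ Ψ (Φ₁ (yInv Φ₁ a * t)) := apply_le_apply_yInv_comp hΨ _
    _ ≤ Ψ (Φ₁ t * a * c₁) :=
      Ψ.monotoneOn (Φ₁.nonneg _) (mul_nonneg hta₀ hΔ₁.1.le) hΦ₁
    _ ≤ Φ₁ t * a * Ψ c₁ := Ψ.apply_mul_le hta₀ hta c₁
    _ = Ψ c₁ * (Φ₁ t * a) := by ring

lemma apply_mul_mul_le (hΔ₁ : YoungDeltaPrime Φ₁ c₁) (hΔ₂ : YoungDeltaPrime Φ₂ c₂)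
    (hΨ : ∀ x : ℝ, 0 ≤ x → Ψ x = Φ₂ (yInv Φ₁ x)) {a t : ℝ} (v : ℝ) (ha : 0 < a)
    (hta : Φ₁ t * a ≤ 1) :
    Φ₂ (v * t) * a ≤ c₂ * Ψ c₁ * (Φ₂ (v / yInv Φ₁ a) * a) * (Φ₁ t * a) := by
  have hd := (Φ₁.yInv_pos ha).ne'
  calc Φ₂ (v * t) * a = Φ₂ (v / yInv Φ₁ a * (yInv Φ₁ a * t)) * a := by field_simp
    _ ≤ c₂ * Φ₂ (v / yInv Φ₁ a) * (Ψ c₁ * (Φ₁ t * a)) * a := by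
      refine mul_le_mul_of_nonneg_right ((hΔ₂.apply_mul_le _ _).trans ?_) ha.le
      exact mul_le_mul_of_nonneg_left (apply_yInv_mul_le hΔ₁ hΨ ha.le hta)
        (mul_nonneg hΔ₂.1.le (Φ₂.nonneg _))
    _ = c₂ * Ψ c₁ * (Φ₂ (v / yInv Φ₁ a) * a) * (Φ₁ t * a) := by ring

end DeltaPrime

section Orlicz

variable {μ : Measure X}

lemma integrable_and_integral_le_one_of_lintegral_le_one {F : X → ℝ}
    (hF : AEStronglyMeasurable F μ) (h0 : ∀ x, 0 ≤ F x)
    (h : ∫⁻ x, ENNReal.ofReal (F x) ∂μ ≤ 1) : Integrable F μ ∧ ∫ x, F x ∂μ ≤ 1 := by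
  have hint : Integrable F μ :=
    ⟨hF, (hasFiniteIntegral_iff_ofReal (ae_of_all _ h0)).2 (h.trans_lt ENNReal.one_lt_top)⟩
  refine ⟨hint, ?_⟩
  rwa [← ENNReal.ofReal_le_one, ofReal_integral_eq_lintegral_ofReal hint (ae_of_all _ h0)]

lemma MemOrlicz.exists_integral_div_le_one {Φ : YoungFunction} {f : X → ℝ}
    (hf : MemOrlicz Φ μ f) : ∃ k > 0, ∫ x, Φ (f x / k) ∂μ ≤ 1 := by
  obtain ⟨-, k, hk, hint⟩ := hf
  set I := ∫ x, Φ (k * f x) ∂μ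
  have hI : 0 ≤ I := integral_nonneg fun x => Φ.nonneg _
  have hscale : ∀ x, Φ (f x / ((I + 1) / k)) ≤ (I + 1)⁻¹ * Φ (k * f x) := fun x => by
    rw [show f x / ((I + 1) / k) = (I + 1)⁻¹ * (k * f x) by field_simp]
    exact Φ.apply_mul_le (by positivity) (inv_le_one_of_one_le₀ (by linarith)) _
  refine ⟨(I + 1) / k, by positivity, ?_⟩
  calc ∫ x, Φ (f x / ((I + 1) / k)) ∂μ ≤ ∫ x, (I + 1)⁻¹ * Φ (k * f x) ∂μ :=
        integral_mono_of_nonneg (ae_of_all _ fun x => Φ.nonneg _) (hint.const_mul _)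
          (ae_of_all _ hscale)
    _ = (I + 1)⁻¹ * I := integral_const_mul _ _
    _ ≤ 1 := by rw [inv_mul_le_iff₀ (by positivity)]; linarith

lemma luxNorm_le_mul_of_forall {Φ₁ Φ₂ : YoungFunction} {f g : X → ℝ} {K : ℝ} (hK : 0 < K)
    (hf : ∃ k > 0, ∫ x, Φ₁ (f x / k) ∂μ ≤ 1)
    (h : ∀ k > 0, ∫ x, Φ₁ (f x / k) ∂μ ≤ 1 → ∫ x, Φ₂ (g x / (K * k)) ∂μ ≤ 1) :
    luxNorm Φ₂ μ g ≤ K * luxNorm Φ₁ μ f := by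
  rw [← div_le_iff₀' hK]
  refine le_csInf hf fun k ⟨hk, hk1⟩ => ?_
  rw [div_le_iff₀' hK]
  exact csInf_le ⟨0, fun _ hk => hk.1.le⟩ ⟨mul_pos hK hk, h k hk hk1⟩

lemma memOrlicz_and_luxNorm_le_of_lintegral_le {Φ₁ Φ₂ : YoungFunction} {f g : X → ℝ} {C : ℝ}
    (hf : MemOrlicz Φ₁ μ f) (hfi : ∀ k > 0, Integrable (fun x => Φ₁ (f x / k)) μ)
    (hg : AEStronglyMeasurable g μ)
    (h : ∀ k > 0, ∫⁻ x, ENNReal.ofReal (Φ₁ (f x / k)) ∂μ ≤ 1 →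
      ∫⁻ x, ENNReal.ofReal (Φ₂ (g x / k)) ∂μ ≤
        ENNReal.ofReal C * ∫⁻ x, ENNReal.ofReal (Φ₁ (f x / k)) ∂μ) :
    MemOrlicz Φ₂ μ g ∧ luxNorm Φ₂ μ g ≤ max C 1 * luxNorm Φ₁ μ f := by
  set K := max C 1
  have hK : 1 ≤ K := le_max_right C 1
  have hscale : ∀ k x, Φ₂ (g x / (K * k)) ≤ K⁻¹ * Φ₂ (g x / k) := fun k x => by
    rw [show g x / (K * k) = K⁻¹ * (g x / k) by ring]
    exact Φ₂.apply_mul_le (by positivity) (inv_le_one_of_one_le₀ hK) _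
  have hnormalized : ∀ k > 0, ∫ x, Φ₁ (f x / k) ∂μ ≤ 1 →
      Integrable (fun x => Φ₂ (g x / (K * k))) μ ∧ ∫ x, Φ₂ (g x / (K * k)) ∂μ ≤ 1 := by
    intro k hk hk1
    have hf1 : ∫⁻ x, ENNReal.ofReal (Φ₁ (f x / k)) ∂μ ≤ 1 := by
      rwa [← ofReal_integral_eq_lintegral_ofReal (hfi k hk) (ae_of_all _ fun x => Φ₁.nonneg _),
        ENNReal.ofReal_le_one]
    refine integrable_and_integral_le_one_of_lintegral_le_one
      ((Φ₂.continuous'.comp (continuous_id.div_const _)).comp_aestronglyMeasurable hg)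
      (fun x => Φ₂.nonneg _) ?_
    calc ∫⁻ x, ENNReal.ofReal (Φ₂ (g x / (K * k))) ∂μ
        ≤ ∫⁻ x, ENNReal.ofReal K⁻¹ * ENNReal.ofReal (Φ₂ (g x / k)) ∂μ :=
          lintegral_mono fun x => by
            rw [← ENNReal.ofReal_mul (by positivity)]
            exact ENNReal.ofReal_le_ofReal (hscale k x)
      _ = ENNReal.ofReal K⁻¹ * ∫⁻ x, ENNReal.ofReal (Φ₂ (g x / k)) ∂μ :=
          lintegral_const_mul' _ _ ENNReal.ofReal_ne_top
      _ ≤ ENNReal.ofReal K⁻¹ * (ENNReal.ofReal C * 1) := by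
          gcongr
          exact (h k hk hf1).trans (by gcongr)
      _ ≤ 1 := by
          rw [mul_one, ← ENNReal.ofReal_mul (by positivity), ENNReal.ofReal_le_one]
          exact inv_mul_le_one_of_le₀ (le_max_left C 1) (by positivity)
  obtain ⟨k, hk, hk1⟩ := hf.exists_integral_div_le_one
  refine ⟨⟨hg, (K * k)⁻¹, by positivity, ?_⟩,
    luxNorm_le_mul_of_forall (by positivity) ⟨k, hk, hk1⟩ fun k hk hk1 => (hnormalized k hk hk1).2⟩
  simpa only [div_eq_inv_mul] using (hnormalized k hk hk1).1

end Orlicz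

section Atoms

variable {μ : Measure X}

lemma IsAtomSet.exists_ae_eq_const {β : Type*} [MeasurableSpace β] [Nonempty β]
    [MeasurableSpace.CountablySeparated β] {A : Set X} (hA : IsAtomSet μ A) (hfin : μ A ≠ ∞)
    {g : X → β} (hg : AEMeasurable g μ) : ∃ c, ∀ᵐ x ∂μ.restrict A, g x = c := by
  have : IsFiniteMeasure (μ.restrict A) := isFiniteMeasure_restrict.2 hfin
  obtain ⟨c, hc⟩ : ∃ c, hg.mk g =ᶠ[ae (μ.restrict A)] Function.const X c := by
    refine exists_eventuallyEq_const_of_forall_separating MeasurableSet fun U hU => ?_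
    have hpre : MeasurableSet (hg.mk g ⁻¹' U) := hg.measurable_mk hU
    rcases hA.2.2 _ (hpre.inter hA.1) Set.inter_subset_right with h | h
    · right
      exact (measure_eq_zero_iff_ae_notMem (s := hg.mk g ⁻¹' U)).1
        (by rwa [Measure.restrict_apply hpre])
    · left
      rw [ae_iff_measure_eq hpre.nullMeasurableSet]
      change μ.restrict A (hg.mk g ⁻¹' U) = _
      rwa [Measure.restrict_apply hpre, Measure.restrict_apply_univ]
  exact ⟨c, by filter_upwards [ae_restrict_of_ae hg.ae_eq_mk, hc] with x h1 h2 using h1.trans h2⟩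

lemma setLIntegral_comp_of_ae_eq_const {β : Type*} {s : Set X} {g : X → β} {c : β}
    (F : β → ℝ≥0∞) (hg : ∀ᵐ x ∂μ.restrict s, g x = c) :
    ∫⁻ x in s, F (g x) ∂μ = F c * μ s := by
  rw [lintegral_congr_ae (hg.mono fun x hx => congrArg F hx), setLIntegral_const]

variable {A : ℕ → Set X} {B : Set X}

lemma AtomicDecomposition.lintegral_eq (hdec : AtomicDecomposition μ A B) (F : X → ℝ≥0∞) :
    ∫⁻ x, F x ∂μ = ∑' n, ∫⁻ x in A n, F x ∂μ + ∫⁻ x in B, F x ∂μ := by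
  obtain ⟨hatom, -, hdisj, hdisjB, hB, -, hcover⟩ := hdec
  rw [← lintegral_iUnion (fun n => (hatom n).1) hdisj,
    ← lintegral_union hB (Set.disjoint_iUnion_left.2 hdisjB), hcover, Measure.restrict_univ]

lemma AtomicDecomposition.lintegral_le_const_mul (hdec : AtomicDecomposition μ A B)
    {F G : X → ℝ≥0∞} {C : ℝ≥0∞} (hA : ∀ n, ∫⁻ x in A n, F x ∂μ ≤ C * ∫⁻ x in A n, G x ∂μ)
    (hB : ∫⁻ x in B, F x ∂μ = 0) : ∫⁻ x, F x ∂μ ≤ C * ∫⁻ x, G x ∂μ := by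
  rw [hdec.lintegral_eq F, hdec.lintegral_eq G, hB, add_zero]
  calc ∑' n, ∫⁻ x in A n, F x ∂μ ≤ ∑' n, C * ∫⁻ x in A n, G x ∂μ := ENNReal.tsum_le_tsum hA
    _ = C * ∑' n, ∫⁻ x in A n, G x ∂μ := ENNReal.tsum_mul_left
    _ ≤ C * (∑' n, ∫⁻ x in A n, G x ∂μ + ∫⁻ x in B, G x ∂μ) := by gcongr; exact le_self_add

end Atoms

section MultiplicationOperator

variable {μ : Measure X} {Φ₁ Φ₂ Ψ : YoungFunction} {c₁ c₂ M : ℝ} {u f : X → ℝ}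

lemma IsAtomSet.setLIntegral_mul_le {A : Set X} (hA : IsAtomSet μ A) (hfin : μ A ≠ ∞)
    (hΔ₁ : YoungDeltaPrime Φ₁ c₁) (hΔ₂ : YoungDeltaPrime Φ₂ c₂)
    (hΨ : ∀ x : ℝ, 0 ≤ x → Ψ x = Φ₂ (yInv Φ₁ x)) {v : ℝ}
    (hu : ∀ᵐ x ∂μ.restrict A, u x = v)
    (hM : Φ₂ (v / yInv Φ₁ (μ A).toReal) * (μ A).toReal ≤ M)
    (hf : AEMeasurable f μ) (hf1 : ∫⁻ x in A, ENNReal.ofReal (Φ₁ (f x)) ∂μ ≤ 1) :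
    ∫⁻ x in A, ENNReal.ofReal (Φ₂ (u x * f x)) ∂μ ≤
      ENNReal.ofReal (c₂ * Ψ c₁ * M) * ∫⁻ x in A, ENNReal.ofReal (Φ₁ (f x)) ∂μ := by
  set a := (μ A).toReal
  have ha : 0 < a := ENNReal.toReal_pos hA.2.1.ne' hfin
  have hmeasure : ∀ r, 0 ≤ r → ENNReal.ofReal r * μ A = ENNReal.ofReal (r * a) :=
    fun r hr => by rw [ENNReal.ofReal_mul hr, ENNReal.ofReal_toReal hfin]
  obtain ⟨t, ht⟩ := hA.exists_ae_eq_const hfin hf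
  have hut : ∀ᵐ x ∂μ.restrict A, u x * f x = v * t := by
    filter_upwards [hu, ht] with x h1 h2
    rw [h1, h2]
  have hΦ₁ : ∫⁻ x in A, ENNReal.ofReal (Φ₁ (f x)) ∂μ = ENNReal.ofReal (Φ₁ t * a) :=
    (setLIntegral_comp_of_ae_eq_const (fun y => ENNReal.ofReal (Φ₁ y)) ht).trans
      (hmeasure _ (Φ₁.nonneg t))
  have hΦ₂ : ∫⁻ x in A, ENNReal.ofReal (Φ₂ (u x * f x)) ∂μ = ENNReal.ofReal (Φ₂ (v * t) * a) :=
    (setLIntegral_comp_of_ae_eq_const (fun y => ENNReal.ofReal (Φ₂ y)) hut).trans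
      (hmeasure _ (Φ₂.nonneg _))
  have hta : Φ₁ t * a ≤ 1 := by rwa [← ENNReal.ofReal_le_one, ← hΦ₁]
  have hC : 0 ≤ c₂ * Ψ c₁ := mul_nonneg hΔ₂.1.le (Ψ.nonneg c₁)
  have hM0 : 0 ≤ M := (mul_nonneg (Φ₂.nonneg _) ha.le).trans hM
  rw [hΦ₁, hΦ₂, ← ENNReal.ofReal_mul (by positivity)]
  refine ENNReal.ofReal_le_ofReal ((apply_mul_mul_le hΔ₁ hΔ₂ hΨ v ha hta).trans ?_)
  gcongr
  exact mul_nonneg (Φ₁.nonneg t) ha.le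

lemma AtomicDecomposition.lintegral_mul_le {A : ℕ → Set X} {B : Set X}
    (hdec : AtomicDecomposition μ A B) (hΔ₁ : YoungDeltaPrime Φ₁ c₁)
    (hΔ₂ : YoungDeltaPrime Φ₂ c₂) (hΨ : ∀ x : ℝ, 0 ≤ x → Ψ x = Φ₂ (yInv Φ₁ x)) {cu : ℕ → ℝ}
    (hcu : ∀ n, ∀ᵐ x ∂μ.restrict (A n), u x = cu n) (hB : ∀ᵐ x ∂μ.restrict B, u x = 0)
    (hM : ∀ n, Φ₂ (cu n / yInv Φ₁ (μ (A n)).toReal) * (μ (A n)).toReal ≤ M)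
    (hf : AEMeasurable f μ) (hf1 : ∫⁻ x, ENNReal.ofReal (Φ₁ (f x)) ∂μ ≤ 1) :
    ∫⁻ x, ENNReal.ofReal (Φ₂ (u x * f x)) ∂μ ≤
      ENNReal.ofReal (c₂ * Ψ c₁ * M) * ∫⁻ x, ENNReal.ofReal (Φ₁ (f x)) ∂μ := by
  refine hdec.lintegral_le_const_mul (fun n => ?_) ?_
  · exact (hdec.1 n).setLIntegral_mul_le (hdec.2.1 n).ne hΔ₁ hΔ₂ hΨ (hcu n) (hM n) hf
      ((setLIntegral_le_lintegral _ _).trans hf1)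
  · have huf : ∀ᵐ x ∂μ.restrict B, u x * f x = 0 := hB.mono fun x hx => by rw [hx, zero_mul]
    rw [setLIntegral_comp_of_ae_eq_const (fun y => ENNReal.ofReal (Φ₂ y)) huf, Φ₂.map_zero,
      ENNReal.ofReal_zero, zero_mul]

end MultiplicationOperator

theorem multiplication_bounded_sufficient_general
    {X : Type*} [MeasurableSpace X] (μ : Measure X)
    (A : ℕ → Set X) (B : Set X) (hdec : AtomicDecomposition μ A B)
    (Φ₁ Φ₂ : YoungFunction) (c₁ c₂ : ℝ)
    (hΔ₁ : YoungDeltaPrime Φ₁ c₁) (hΔ₂ : YoungDeltaPrime Φ₂ c₂)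
    (hcomp : ∃ Ψ : YoungFunction, ∀ x : ℝ, 0 ≤ x → Ψ x = Φ₂ (yInv Φ₁ x))
    (u : X → ℝ) (hu : Measurable u)
    (cu : ℕ → ℝ) (hcu : ∀ n, ∀ᵐ x ∂μ.restrict (A n), u x = cu n)
    (hB : ∀ᵐ x ∂μ.restrict B, u x = 0)
    (hsup : ∃ M : ℝ, ∀ n,
      Φ₂ (cu n / yInv Φ₁ (μ (A n)).toReal) * (μ (A n)).toReal ≤ M) :
    OrliczBounded Φ₁ Φ₂ μ (fun f x => u x * f x) := by
  obtain ⟨Ψ, hΨ⟩ := hcomp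
  obtain ⟨M, hM⟩ := hsup
  refine ⟨max (c₂ * Ψ c₁ * M) 1, lt_max_of_lt_right one_pos, fun f hf => ?_⟩
  refine memOrlicz_and_luxNorm_le_of_lintegral_le hf (fun k _ => ?_)
    (hu.aestronglyMeasurable.mul hf.1) fun k _ hk1 => ?_
  · simpa only [div_eq_inv_mul] using hΔ₁.integrable_apply_mul hf k⁻¹
  · simpa only [mul_div_assoc] using
      hdec.lintegral_mul_le hΔ₁ hΔ₂ hΨ hcu hB hM (hf.1.aemeasurable.div_const k) hk1

/-- sufficient conditions for boundedness of `M_u` when `Φ₁, Φ₂ ∈ Δ'`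
and `Φ₂ ∘ Φ₁⁻¹` is a Young function. -/
theorem multiplication_bounded_sufficient
    {X : Type*} [MeasurableSpace X] (μ : Measure X) [SigmaFinite μ]
    (A : ℕ → Set X) (B : Set X) (hdec : AtomicDecomposition μ A B)
    (Φ₁ Φ₂ : YoungFunction) (c₁ c₂ : ℝ)
    (hΔ₁ : YoungDeltaPrime Φ₁ c₁) (hΔ₂ : YoungDeltaPrime Φ₂ c₂)
    (hcomp : ∃ Ψ : YoungFunction, ∀ x : ℝ, 0 ≤ x → Ψ x = Φ₂ (yInv Φ₁ x))
    (u : X → ℝ) (hu : Measurable u)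
    (cu : ℕ → ℝ) (hcu : ∀ n, ∀ᵐ x ∂μ.restrict (A n), u x = cu n)
    (hB : ∀ᵐ x ∂μ.restrict B, u x = 0)
    (hsup : ∃ M : ℝ, ∀ n,
      Φ₂ (cu n / yInv Φ₁ (μ (A n)).toReal) * (μ (A n)).toReal ≤ M) :
    OrliczBounded Φ₁ Φ₂ μ (fun f x => u x * f x) :=
  multiplication_bounded_sufficient_general μ A B hdec Φ₁ Φ₂ c₁ c₂ hΔ₁ hΔ₂ hcomp u hu cu hcu hB hsup
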